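/- Block-additivity of colength for products of surfaced permutations: if (𝒜,α,g) ⊙ (ℬ,β,h) = (𝒞,γ,k) with the genus function k defined by k(C) = (|(𝒜|_C, α|_C, g|_C)| + |(ℬ|_C, β|_C, h|_C)| − |(𝒜∨ℬ|_C, α∘β|_C)|)/2 for each block C of 𝒞 = 𝒜∨ℬ, then for every block C: |(𝒜|_C, α|_C, g|_C)| + |(ℬ|_C, β|_C, h|_C)| = |(𝒞|_C, γ|_C, k|_C)|, and moreover k(C) ≥ Σ_{A∈𝒜, A⊆C} g(A) + Σ_{B∈ℬ, B⊆C} h(B), with the difference being a nonnegative integer. -/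

import Mathlib

open Equiv

/-- The setoid on `β` whose classes are the supports of the cycles of `α`
(fixed points giving singleton classes); this is the partition `𝟎_α`. -/
def cycleSetoid {β : Type*} (α : Equiv.Perm β) : Setoid β :=
  ⟨α.SameCycle, ⟨fun x => Equiv.Perm.SameCycle.refl α x, fun h => h.symm, fun h h' => h.trans h'⟩⟩

/-- Number of blocks of a set partition (encoded as a setoid). -/
noncomputable def numBlocks {β : Type*} (s : Setoid β) : ℕ :=
  Nat.card (Quotient s)

/-- Number of cycles of a permutation, counting fixed points as cycles. -/
noncomputable def numCycles {β : Type*} (α : Equiv.Perm β) : ℕ :=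
  numBlocks (cycleSetoid α)

/-- The colength `|α| = d - #cycles(α)` of a permutation of `Fin d`. -/
noncomputable def permColength {d : ℕ} (α : Equiv.Perm (Fin d)) : ℕ :=
  d - numCycles α

/-- A partitioned permutation of `[d]`: a pair `(𝒜, α)` of a set partition `𝒜` of `[d]`
and a permutation `α` of `[d]` such that `𝟎_α ≤ 𝒜`, i.e. every cycle support of `α`
is contained in a block of `𝒜`. -/
structure PartPerm (d : ℕ) where
  part : Setoid (Fin d)
  perm : Equiv.Perm (Fin d)
  refines : ∀ x y : Fin d, perm.SameCycle x y → part.r x y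

theorem PartPerm.ext' {d : ℕ} {p q : PartPerm d}
    (h1 : p.part = q.part) (h2 : p.perm = q.perm) : p = q := by
  cases p; cases q; simp_all

/-- Colength `|(𝒜,α)| = 2|𝒜| - |α| = 2(d - #𝒜) - (d - #cycles α)`, as an integer. -/
noncomputable def pairColength {d : ℕ} (s : Setoid (Fin d)) (σ : Equiv.Perm (Fin d)) : ℤ :=
  2 * ((d : ℤ) - numBlocks s) - ((d : ℤ) - numCycles σ)

noncomputable def PartPerm.colength {d : ℕ} (p : PartPerm d) : ℤ :=
  pairColength p.part p.perm

/-- The block of the class `c` of the setoid `s`, as a subset of `Fin d`. -/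
def blockOf {d : ℕ} (s : Setoid (Fin d)) (c : Quotient s) : Set (Fin d) :=
  {y | Quotient.mk s y = c}

/-- Number of blocks of the restriction `s|_C` of a partition to a subset `C`. -/
noncomputable def blocksIn {d : ℕ} (s : Setoid (Fin d)) (C : Set (Fin d)) : ℚ :=
  Nat.card (Quotient (Setoid.comap (Subtype.val : C → Fin d) s))

/-- The colength `|(𝒜|_C, α|_C)| = 2(#C - #blocks) - (#C - #cycles)` of the restriction
of a partitioned permutation to a subset `C`. -/
noncomputable def colRestr {d : ℕ} (s : Setoid (Fin d)) (σ : Equiv.Perm (Fin d))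
    (C : Set (Fin d)) : ℚ :=
  2 * ((Nat.card C : ℚ) - blocksIn s C) - ((Nat.card C : ℚ) - blocksIn (cycleSetoid σ) C)

/-- The total genus `Σ_{A ∈ 𝒜, A ⊆ C} g(A)` of the blocks of `𝒜` contained in `C`. -/
noncomputable def genusSum {d : ℕ} (s : Setoid (Fin d)) (g : Quotient s → ℚ)
    (C : Set (Fin d)) : ℚ :=
  open scoped Classical in
  ∑ᶠ c : Quotient s, if blockOf s c ⊆ C then g c else 0

/-- The colength `|(𝒜|_C, α|_C, g|_C)| = |(𝒜|_C, α|_C)| + Σ_{A ⊆ C} 2 g(A)` of the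
restriction of a surfaced permutation to a subset `C`. -/
noncomputable def surfColRestr {d : ℕ} (s : Setoid (Fin d)) (σ : Equiv.Perm (Fin d))
    (g : Quotient s → ℚ) (C : Set (Fin d)) : ℚ :=
  colRestr s σ C + 2 * genusSum s g C


/-!
On a block `C` of `𝒜 ∨ ℬ` with `n` points, the claim amounts to
`n + 2·#(𝒜 ∨ ℬ) + #cyc α + #cyc β - 2·#𝒜 - 2·#ℬ - #cyc αβ` being a nonnegative even number.
Parity comes from `sign σ = (-1) ^ (n + #cyc σ)`. For nonnegativity, first take `𝒜 = 𝟎_α`,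
`ℬ = 𝟎_β`: this is nonnegativity of the genus, proved by building `α` from `1` by transpositions
that merge two cycles, each of which changes `#cyc αβ` by `±1`. The general case follows from
semimodularity of the partition lattice, `#(𝒯 ∨ 𝒮) + #𝒮' ≤ #(𝒯 ∨ 𝒮') + #𝒮` for `𝒮 ≤ 𝒮'`,
applied to `𝟎_α ≤ 𝒜` and `𝟎_β ≤ ℬ`. Restriction to a union of blocks commutes with joins, so the
block statement is the global statement on `C`.
-/

open Equiv.Perm

section CycleSetoid

variable {X : Type*}

theorem cycleSetoid_le_iff {σ : Perm X} {s : Setoid X} :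
    cycleSetoid σ ≤ s ↔ ∀ x, s x (σ x) := by
  refine ⟨fun h x => h ⟨1, rfl⟩, fun h => ?_⟩
  rintro x _ ⟨i, rfl⟩
  induction i using Int.induction_on with
  | zero => exact s.refl x
  | succ i ih => rw [add_comm, zpow_one_add, mul_apply]; exact s.trans ih (h _)
  | pred i ih =>
    have hstep := h ((σ ^ (-(i : ℤ) - 1)) x)
    rw [← mul_apply, ← zpow_one_add, add_sub_cancel] at hstep
    exact s.trans ih (s.symm hstep)

theorem cycleSetoid_mul_le (σ τ : Perm X) :
    cycleSetoid (σ * τ) ≤ cycleSetoid σ ⊔ cycleSetoid τ :=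
  cycleSetoid_le_iff.2 fun _ =>
    (cycleSetoid σ ⊔ cycleSetoid τ).trans (le_sup_right (a := cycleSetoid σ) ⟨1, rfl⟩)
      (le_sup_left (b := cycleSetoid τ) ⟨1, rfl⟩)

theorem cycleSetoid_one : cycleSetoid (1 : Perm X) = ⊥ :=
  Setoid.ext fun _ _ => sameCycle_one

theorem cycleSetoid_swap_le_iff [DecidableEq X] {a b : X} {s : Setoid X} :
    cycleSetoid (swap a b) ≤ s ↔ s a b := by
  refine ⟨fun h => h ⟨1, swap_apply_left a b⟩, fun hab => cycleSetoid_le_iff.2 fun x => ?_⟩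
  rcases eq_or_ne x a with rfl | hxa
  · rwa [swap_apply_left]
  rcases eq_or_ne x b with rfl | hxb
  · rw [swap_apply_right]; exact s.symm hab
  · rw [swap_apply_of_ne_of_ne hxa hxb]

theorem cycleSetoid_subtypePerm {C : Set X} (σ : Perm X) (h : ∀ x, σ x ∈ C ↔ x ∈ C) :
    cycleSetoid (σ.subtypePerm h) = (cycleSetoid σ).comap Subtype.val := by
  ext x y
  refine exists_congr fun i => ?_
  rw [subtypePerm_zpow, Subtype.ext_iff, subtypePerm_apply]

end CycleSetoid

section NumBlocks

variable {X : Type*}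

theorem numBlocks_bot : numBlocks (⊥ : Setoid X) = Nat.card X :=
  Nat.card_congr Setoid.quotientBotEquiv

theorem numCycles_one : numCycles (1 : Perm X) = Nat.card X := by
  rw [numCycles, cycleSetoid_one, numBlocks_bot]

variable [Finite X]

theorem numBlocks_anti {s t : Setoid X} (h : s ≤ t) : numBlocks t ≤ numBlocks s :=
  Nat.card_le_card_of_surjective (Quotient.map' id h) fun q =>
    q.inductionOn' fun x => ⟨Quotient.mk'' x, rfl⟩

variable [DecidableEq X]

theorem numBlocks_cycleSetoid_swap_sup_add_one {s : Setoid X} {a b : X} (h : ¬s a b) :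
    numBlocks (cycleSetoid (swap a b) ⊔ s) + 1 = numBlocks s := by
  classical
  set u := cycleSetoid (swap a b) ⊔ s
  have hs : s ≤ u := le_sup_right
  have hab : u a b := (le_sup_left : cycleSetoid (swap a b) ≤ u) ⟨1, swap_apply_left a b⟩
  -- `u` glues the class of `b` onto the class of `a`, so it is the kernel of `merge ∘ mk`.
  let merge (q : Quotient s) : Quotient s := if q = ⟦b⟧ then ⟦a⟧ else q
  have hrep : ∀ z, ∃ w, merge ⟦z⟧ = ⟦w⟧ ∧ u z w := by
    intro z
    by_cases hz : (⟦z⟧ : Quotient s) = ⟦b⟧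
    · exact ⟨a, if_pos hz, u.trans (hs (Quotient.exact hz)) (u.symm hab)⟩
    · exact ⟨z, if_neg hz, u.refl z⟩
  have hker : u = Setoid.ker (merge ∘ Quotient.mk s) := by
    refine le_antisymm (sup_le (cycleSetoid_swap_le_iff.2 ?_) fun x y hxy => ?_) fun x y hxy => ?_
    · show merge ⟦a⟧ = merge ⟦b⟧
      simp [merge]
    · show merge ⟦x⟧ = merge ⟦y⟧
      rw [Quotient.sound hxy]
    · obtain ⟨w, hw, hxw⟩ := hrep x
      obtain ⟨w', hw', hyw'⟩ := hrep y
      have hww' : s w w' := Quotient.exact (hw.symm.trans (hxy.trans hw'))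
      exact u.trans hxw (u.trans (hs hww') (u.symm hyw'))
  have hrange : Set.range (merge ∘ Quotient.mk s) = {⟦b⟧}ᶜ := by
    ext q
    refine ⟨?_, fun hq => ?_⟩
    · rintro ⟨x, rfl⟩
      by_cases hx : (⟦x⟧ : Quotient s) = ⟦b⟧
      · simpa [merge, hx] using fun hab' => h (Quotient.exact hab')
      · simp [merge, hx]
    · induction q using Quotient.inductionOn with
      | h x => exact ⟨x, if_neg hq⟩
  rw [numBlocks, hker, Nat.card_congr (Setoid.quotientKerEquivRange _), hrange,
    Nat.card_coe_set_eq, ← Set.ncard_singleton (⟦b⟧ : Quotient s), add_comm,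
    Set.ncard_add_ncard_compl, numBlocks]

theorem numBlocks_le_numBlocks_cycleSetoid_swap_sup_add_one (s : Setoid X) (a b : X) :
    numBlocks s ≤ numBlocks (cycleSetoid (swap a b) ⊔ s) + 1 := by
  by_cases hab : s a b
  · rw [sup_eq_right.2 (cycleSetoid_swap_le_iff.2 hab)]
    exact Nat.le_succ _
  · rw [numBlocks_cycleSetoid_swap_sup_add_one hab]

end NumBlocks

section Semimodular

variable {X : Type*} [Finite X]

theorem numBlocks_sup_add_numBlocks_le (t : Setoid X) {s s' : Setoid X} (h : s ≤ s') :
    numBlocks (t ⊔ s) + numBlocks s' ≤ numBlocks (t ⊔ s') + numBlocks s := by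
  classical
  by_cases hs' : s' ≤ s
  · obtain rfl := le_antisymm h hs'
    rfl
  obtain ⟨a, b, hab', hab⟩ : ∃ a b, s' a b ∧ ¬s a b := by
    simpa [Setoid.le_def] using hs'
  have hcount := numBlocks_cycleSetoid_swap_sup_add_one hab
  have ih := numBlocks_sup_add_numBlocks_le t (sup_le (cycleSetoid_swap_le_iff.2 hab') h)
  have hmerge := numBlocks_le_numBlocks_cycleSetoid_swap_sup_add_one (t ⊔ s) a b
  rw [sup_left_comm] at ih
  omega
termination_by numBlocks s
decreasing_by
  classical
  have := numBlocks_cycleSetoid_swap_sup_add_one hab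
  omega

end Semimodular

section Swap

variable {X : Type*} [DecidableEq X] [Finite X]

theorem sameCycle_swap_mul_of_not_sameCycle {σ : Perm X} {a b : X} (h : ¬σ.SameCycle a b) :
    (swap a b * σ).SameCycle a b := by
  have hper : ∃ k, 0 < k ∧ (σ ^ k) a = a :=
    ⟨orderOf σ, (isOfFinOrder_of_finite σ).orderOf_pos, by rw [pow_orderOf_eq_one, one_apply]⟩
  obtain ⟨k, ⟨hk_pos, hk⟩, hmin⟩ : ∃ k, (0 < k ∧ (σ ^ k) a = a) ∧
      ∀ j < k, ¬(0 < j ∧ (σ ^ j) a = a) :=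
    ⟨Nat.find hper, Nat.find_spec hper, fun _ => Nat.find_min hper⟩
  have hne_b (j : ℕ) : (σ ^ j) a ≠ b := fun hj => h ⟨j, by rwa [zpow_natCast]⟩
  -- Before `σ` first returns to `a`, the orbit of `a` avoids `a` and `b`, so the swap is inert.
  have htrace : ∀ j < k, ((swap a b * σ) ^ j) a = (σ ^ j) a := by
    intro j
    induction j with
    | zero => simp
    | succ j ih =>
      intro hj
      rw [pow_succ', mul_apply, ih (by omega), mul_apply, ← mul_apply σ, ← pow_succ',
        swap_apply_of_ne_of_ne (fun hja => hmin _ hj ⟨j.succ_pos, hja⟩) (hne_b _)]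
  obtain ⟨j, rfl⟩ : ∃ j, k = j + 1 := ⟨k - 1, by omega⟩
  refine ⟨(j + 1 : ℕ), ?_⟩
  rw [zpow_natCast, pow_succ', mul_apply, htrace j (by omega), mul_apply, ← mul_apply σ,
    ← pow_succ', hk, swap_apply_left]

theorem cycleSetoid_swap_mul_of_not_sameCycle {σ : Perm X} {a b : X} (h : ¬σ.SameCycle a b) :
    cycleSetoid (swap a b * σ) = cycleSetoid (swap a b) ⊔ cycleSetoid σ := by
  refine le_antisymm (cycleSetoid_mul_le _ _) (sup_le ?_ ?_)
  · exact cycleSetoid_swap_le_iff.2 (sameCycle_swap_mul_of_not_sameCycle h)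
  · calc cycleSetoid σ = cycleSetoid (swap a b * (swap a b * σ)) := by rw [swap_mul_self_mul]
      _ ≤ cycleSetoid (swap a b) ⊔ cycleSetoid (swap a b * σ) := cycleSetoid_mul_le _ _
      _ = cycleSetoid (swap a b * σ) :=
        sup_eq_right.2 (cycleSetoid_swap_le_iff.2 (sameCycle_swap_mul_of_not_sameCycle h))

theorem numCycles_swap_mul_add_one {σ : Perm X} {a b : X} (h : ¬σ.SameCycle a b) :
    numCycles (swap a b * σ) + 1 = numCycles σ := by
  rw [numCycles, cycleSetoid_swap_mul_of_not_sameCycle h]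
  exact numBlocks_cycleSetoid_swap_sup_add_one h

theorem numCycles_swap_mul_le (σ : Perm X) (a b : X) :
    numCycles (swap a b * σ) ≤ numCycles σ + 1 := by
  have hle : cycleSetoid σ ≤ cycleSetoid (swap a b) ⊔ cycleSetoid (swap a b * σ) := by
    simpa only [swap_mul_self_mul] using cycleSetoid_mul_le (swap a b) (swap a b * σ)
  have := numBlocks_anti hle
  have := numBlocks_le_numBlocks_cycleSetoid_swap_sup_add_one (cycleSetoid (swap a b * σ)) a b
  rw [numCycles, numCycles]
  omega

@[elab_as_elim]
theorem Equiv.Perm.merge_induction_on {motive : Perm X → Prop} (σ : Perm X) (one : motive 1)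
    (swap_mul : ∀ σ a b, ¬σ.SameCycle a b → motive σ → motive (swap a b * σ)) : motive σ := by
  cases nonempty_fintype X
  induction hn : σ.support.card using Nat.strong_induction_on generalizing σ with
  | _ n ih =>
    rcases eq_or_ne σ 1 with rfl | hσ
    · exact one
    obtain ⟨a, ha⟩ : ∃ a, σ a ≠ a := not_forall.1 fun h => hσ (Equiv.ext h)
    -- Splitting `a` off as a fixed point shrinks the support; merging it back recovers `σ`.
    have hfix : (swap a (σ a) * σ) a = a := by rw [mul_apply, swap_apply_right]
    have := swap_mul _ a (σ a) (fun hc => ha (hc.eq_of_left hfix).symm)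
      (ih _ (hn ▸ card_support_swap_mul ha) _ rfl)
    rwa [swap_mul_self_mul] at this

theorem sign_eq_neg_one_pow_numCycles [Fintype X] (σ : Perm X) :
    sign σ = (-1) ^ (Nat.card X + numCycles σ) := by
  induction σ using Equiv.Perm.merge_induction_on with
  | one => rw [Perm.sign_one, numCycles_one, ← two_mul, pow_mul, neg_one_sq, one_pow]
  | swap_mul σ a b hab ih =>
    have hne : a ≠ b := fun h => hab (h ▸ SameCycle.refl σ a)
    rw [Perm.sign_mul, sign_swap hne, ih, ← numCycles_swap_mul_add_one hab, ← add_assoc, pow_succ,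
      mul_neg_one, neg_one_mul, neg_neg]

end Swap

section Genus

variable {X : Type*} [Finite X]

theorem numCycles_add_numCycles_add_numCycles_mul_le (α β : Perm X) :
    numCycles α + numCycles β + numCycles (α * β) ≤
      Nat.card X + 2 * numBlocks (cycleSetoid α ⊔ cycleSetoid β) := by
  classical
  induction α using Equiv.Perm.merge_induction_on with
  | one =>
    rw [numCycles_one, one_mul, cycleSetoid_one, bot_sup_eq, numCycles]
    omega
  | swap_mul α a b hab ih =>
    have hα := numCycles_swap_mul_add_one hab
    rw [mul_assoc, cycleSetoid_swap_mul_of_not_sameCycle hab, sup_assoc]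
    by_cases hαβ : (α * β).SameCycle a b
    · have hle : cycleSetoid (swap a b) ≤ cycleSetoid α ⊔ cycleSetoid β :=
        (cycleSetoid_swap_le_iff.2 hαβ).trans (cycleSetoid_mul_le α β)
      have := numCycles_swap_mul_le (α * β) a b
      rw [sup_eq_right.2 hle]
      omega
    · have := numCycles_swap_mul_add_one hαβ
      have := numBlocks_le_numBlocks_cycleSetoid_swap_sup_add_one
        (cycleSetoid α ⊔ cycleSetoid β) a b
      omega

theorem even_card_add_numCycles_add_numCycles_add_numCycles_mul (α β : Perm X) :
    Even (Nat.card X + numCycles α + numCycles β + numCycles (α * β)) := by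
  classical
  cases nonempty_fintype X
  have hsign := Perm.sign_mul α β
  rw [sign_eq_neg_one_pow_numCycles, sign_eq_neg_one_pow_numCycles,
    sign_eq_neg_one_pow_numCycles, ← pow_add] at hsign
  have hone : (-1 : ℤˣ) ^ (Nat.card X + numCycles (α * β) +
      (Nat.card X + numCycles α + (Nat.card X + numCycles β))) = 1 := by
    rw [pow_add, hsign, Int.units_mul_self]
  obtain ⟨r, hr⟩ := (neg_one_pow_eq_one_iff_even (by decide)).1 hone
  exact ⟨r - Nat.card X, by omega⟩

theorem exists_card_add_numBlocks_sup_eq {α β : Perm X} {s t : Setoid X}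
    (hα : cycleSetoid α ≤ s) (hβ : cycleSetoid β ≤ t) :
    ∃ m : ℕ, Nat.card X + 2 * numBlocks (s ⊔ t) + numCycles α + numCycles β =
      2 * numBlocks s + 2 * numBlocks t + numCycles (α * β) + 2 * m := by
  have hgenus := numCycles_add_numCycles_add_numCycles_mul_le α β
  have hs := numBlocks_sup_add_numBlocks_le (cycleSetoid β) hα
  have ht := numBlocks_sup_add_numBlocks_le s hβ
  obtain ⟨r, hr⟩ := even_card_add_numCycles_add_numCycles_add_numCycles_mul α β
  rw [sup_comm (cycleSetoid β), sup_comm (cycleSetoid β)] at hs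
  unfold numCycles at *
  exact ⟨r + numBlocks (s ⊔ t) - numBlocks s - numBlocks t - numBlocks (cycleSetoid (α * β)),
    by omega⟩

end Genus

section Restriction

variable {X : Type*}

theorem Setoid.comap_val_sup {s t : Setoid X} {C : Set X}
    (hs : ∀ ⦃x y⦄, s x y → x ∈ C → y ∈ C) (ht : ∀ ⦃x y⦄, t x y → x ∈ C → y ∈ C) :
    (s ⊔ t).comap ((↑) : C → X) = s.comap (↑) ⊔ t.comap (↑) := by
  classical
  refine le_antisymm ?_ (sup_le (fun _ _ h => le_sup_left (b := t) h)
    (fun _ _ h => le_sup_right (a := s) h))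
  rintro ⟨x, hx⟩ ⟨y, hy⟩ hxy
  set S : Setoid C := s.comap (↑) ⊔ t.comap (↑)
  -- Pull `S` back along a retraction of `X` onto `C`.
  let r (z : X) : C := if hz : z ∈ C then ⟨z, hz⟩ else ⟨x, hx⟩
  have hr : ∀ u : Setoid X, (∀ ⦃z w⦄, u z w → z ∈ C → w ∈ C) →
      u.comap ((↑) : C → X) ≤ S → u ≤ S.comap r := by
    intro u hu hle z w hzw
    show S (r z) (r w)
    by_cases hz : z ∈ C
    · have hw := hu hzw hz
      rw [show r z = ⟨z, hz⟩ from dif_pos hz, show r w = ⟨w, hw⟩ from dif_pos hw]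
      exact hle hzw
    · have hw : w ∉ C := fun hw => hz (hu (u.symm hzw) hw)
      rw [show r z = ⟨x, hx⟩ from dif_neg hz, show r w = ⟨x, hx⟩ from dif_neg hw]
  have hxy' : S (r x) (r y) := sup_le (hr s hs le_sup_left) (hr t ht le_sup_right) hxy
  rwa [show r x = ⟨x, hx⟩ from dif_pos hx, show r y = ⟨y, hy⟩ from dif_pos hy] at hxy'

theorem PartPerm.cycleSetoid_le {d : ℕ} (p : PartPerm d) : cycleSetoid p.perm ≤ p.part :=
  fun x y h => p.refines x y h

theorem PartPerm.perm_mem_iff {d : ℕ} (p : PartPerm d) {C : Set (Fin d)}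
    (hC : ∀ ⦃x y⦄, p.part x y → x ∈ C → y ∈ C) (x : Fin d) : p.perm x ∈ C ↔ x ∈ C :=
  ⟨hC (p.part.symm (p.cycleSetoid_le ⟨1, rfl⟩)), hC (p.cycleSetoid_le ⟨1, rfl⟩)⟩

theorem blocksIn_cycleSetoid {d : ℕ} {C : Set (Fin d)} (σ : Perm (Fin d))
    (h : ∀ x, σ x ∈ C ↔ x ∈ C) : blocksIn (cycleSetoid σ) C = numCycles (σ.subtypePerm h) := by
  rw [blocksIn, numCycles, numBlocks, cycleSetoid_subtypePerm]

end Restriction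

section Blocks

variable {d : ℕ}

theorem exists_colRestr_add_colRestr_sub_colRestr_eq (A B : PartPerm d) {C : Set (Fin d)}
    (hA : ∀ ⦃x y⦄, A.part x y → x ∈ C → y ∈ C) (hB : ∀ ⦃x y⦄, B.part x y → x ∈ C → y ∈ C) :
    ∃ m : ℕ, colRestr A.part A.perm C + colRestr B.part B.perm C
      - colRestr (A.part ⊔ B.part) (A.perm * B.perm) C = 2 * m := by
  have hαC := A.perm_mem_iff hA
  have hβC := B.perm_mem_iff hB
  have hαβC : ∀ x, (A.perm * B.perm) x ∈ C ↔ x ∈ C := fun x => (hαC _).trans (hβC x)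
  obtain ⟨m, hm⟩ := exists_card_add_numBlocks_sup_eq
    (α := A.perm.subtypePerm hαC) (β := B.perm.subtypePerm hβC)
    (s := A.part.comap ((↑) : C → Fin d)) (t := B.part.comap ((↑) : C → Fin d))
    (by rw [cycleSetoid_subtypePerm]; exact fun x y h => A.cycleSetoid_le h)
    (by rw [cycleSetoid_subtypePerm]; exact fun x y h => B.cycleSetoid_le h)
  have hsup : blocksIn (A.part ⊔ B.part) C =
      numBlocks (A.part.comap ((↑) : C → Fin d) ⊔ B.part.comap (↑)) := by
    rw [← Setoid.comap_val_sup hA hB]; rfl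
  have hA' : blocksIn A.part C = numBlocks (A.part.comap ((↑) : C → Fin d)) := rfl
  have hB' : blocksIn B.part C = numBlocks (B.part.comap ((↑) : C → Fin d)) := rfl
  rw [subtypePerm_mul] at hm
  refine ⟨m, ?_⟩
  rw [colRestr, colRestr, colRestr, hA', hB', hsup, blocksIn_cycleSetoid _ hαC,
    blocksIn_cycleSetoid _ hβC, blocksIn_cycleSetoid _ hαβC]
  have hm' := congrArg (Nat.cast : ℕ → ℚ) hm
  push_cast at hm'
  linarith

theorem mem_blockOf_of_rel {s : Setoid (Fin d)} {c : Quotient s} {x y : Fin d} (h : s x y)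
    (hx : x ∈ blockOf s c) : y ∈ blockOf s c :=
  (Quotient.sound h).symm.trans hx

theorem genusSum_blockOf (s : Setoid (Fin d)) (g : Quotient s → ℚ) (c : Quotient s) :
    genusSum s g (blockOf s c) = g c := by
  rw [genusSum, finsum_eq_single _ c, if_pos subset_rfl]
  intro c' hc'
  refine if_neg fun hsub => hc' ?_
  induction c' using Quotient.inductionOn with
  | h x => exact hsub rfl

end Blocks

theorem surfaced_colength_block_additivity_general (d : ℕ) (A B : PartPerm d)
    (g : Quotient A.part → ℚ) (h : Quotient B.part → ℚ)
    (k : Quotient (A.part ⊔ B.part) → ℚ)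
    (hk : ∀ c, k c =
      (surfColRestr A.part A.perm g (blockOf (A.part ⊔ B.part) c)
        + surfColRestr B.part B.perm h (blockOf (A.part ⊔ B.part) c)
        - colRestr (A.part ⊔ B.part) (A.perm * B.perm) (blockOf (A.part ⊔ B.part) c)) / 2) :
    ∀ c : Quotient (A.part ⊔ B.part),
      (surfColRestr A.part A.perm g (blockOf (A.part ⊔ B.part) c)
          + surfColRestr B.part B.perm h (blockOf (A.part ⊔ B.part) c)
        = surfColRestr (A.part ⊔ B.part) (A.perm * B.perm) k (blockOf (A.part ⊔ B.part) c)) ∧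
      ∃ m : ℕ, k c = genusSum A.part g (blockOf (A.part ⊔ B.part) c)
          + genusSum B.part h (blockOf (A.part ⊔ B.part) c) + m := by
  intro c
  obtain ⟨m, hm⟩ := exists_colRestr_add_colRestr_sub_colRestr_eq A B
    (C := blockOf (A.part ⊔ B.part) c)
    (fun _ _ hxy => mem_blockOf_of_rel (le_sup_left (b := B.part) hxy))
    (fun _ _ hxy => mem_blockOf_of_rel (le_sup_right (a := A.part) hxy))
  refine ⟨?_, m, ?_⟩
  · simp only [surfColRestr, genusSum_blockOf, hk c]
    ring
  · rw [hk c, surfColRestr, surfColRestr]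
    linarith

/-- Block-additivity of colength for products of surfaced permutations: with the genus
function `k` of the product `(𝒜,α,g) ⊙ (ℬ,β,h)` defined on each block `C` of `𝒜 ∨ ℬ` by
`k(C) = (|(𝒜|_C,α|_C,g|_C)| + |(ℬ|_C,β|_C,h|_C)| - |(𝒜∨ℬ|_C, αβ|_C)|)/2`, one has
`|(𝒜|_C,α|_C,g|_C)| + |(ℬ|_C,β|_C,h|_C)| = |(𝒞|_C, γ|_C, k|_C)|`, and moreover
`k(C) ≥ Σ_{A ⊆ C} g(A) + Σ_{B ⊆ C} h(B)` with the difference a nonnegative integer. -/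
theorem surfaced_colength_block_additivity (d : ℕ) (A B : PartPerm d)
    (g : Quotient A.part → ℚ) (h : Quotient B.part → ℚ)
    (hg : ∀ c, ∃ m : ℕ, g c = (m : ℚ) / 2) (hh : ∀ c, ∃ m : ℕ, h c = (m : ℚ) / 2)
    (k : Quotient (A.part ⊔ B.part) → ℚ)
    (hk : ∀ c, k c =
      (surfColRestr A.part A.perm g (blockOf (A.part ⊔ B.part) c)
        + surfColRestr B.part B.perm h (blockOf (A.part ⊔ B.part) c)
        - colRestr (A.part ⊔ B.part) (A.perm * B.perm) (blockOf (A.part ⊔ B.part) c)) / 2) :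
    ∀ c : Quotient (A.part ⊔ B.part),
      (surfColRestr A.part A.perm g (blockOf (A.part ⊔ B.part) c)
          + surfColRestr B.part B.perm h (blockOf (A.part ⊔ B.part) c)
        = surfColRestr (A.part ⊔ B.part) (A.perm * B.perm) k (blockOf (A.part ⊔ B.part) c)) ∧
      ∃ m : ℕ, k c = genusSum A.part g (blockOf (A.part ⊔ B.part) c)
          + genusSum B.part h (blockOf (A.part ⊔ B.part) c) + m :=
  surfaced_colength_block_additivity_general d A B g h k hk
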